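/- Let G ≠ Kₙ be a simple graph on n vertices with m ≥ 1 edges, and let k ≥ 2. If m ≥ n²/4, then ||LI(G)||_{F_k} ≤ 2m/n + (k−1)·spr(L(G)), where spr(L(G)) = μ₁(G) − μₙ₋₁(G) is the Laplacian spread of G. -/

import Mathlib

open Finset SimpleGraph

attribute [local instance] Classical.propDecidable

/-- The `i`-th largest value of the tuple `f` (values sorted in non-increasing order). -/
noncomputable def sortDesc {n : ℕ} (f : Fin n → ℝ) : Fin n → ℝ :=
  fun i => f (Tuple.sort f i.rev)

/-- The Laplacian eigenvalues of `G`, in non-increasing order: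
`lapEig G 0 = μ₁ ≥ lapEig G 1 = μ₂ ≥ ⋯`. -/
noncomputable def lapEig {n : ℕ} (G : SimpleGraph (Fin n)) : Fin n → ℝ :=
  sortDesc (SimpleGraph.posSemidef_lapMatrix ℝ G).isHermitian.eigenvalues

/-- The number of edges of `G`. -/
noncomputable def numEdges {n : ℕ} (G : SimpleGraph (Fin n)) : ℕ :=
  G.edgeFinset.card

/-- The singular values of the LI-matrix `LI(G) = L(G) - (2m/n)·Iₙ`, in non-increasing
order; they are the values `|μᵢ - 2m/n|` sorted non-increasingly. -/
noncomputable def LIsv {n : ℕ} (G : SimpleGraph (Fin n)) : Fin n → ℝ :=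
  sortDesc (fun i => |lapEig G i - 2 * numEdges G / n|)

/-- The Ky Fan `k`-norm of the LI-matrix of `G`: the sum of the `k` largest singular
values of `LI(G)`. -/
noncomputable def kyFanLI {n : ℕ} (G : SimpleGraph (Fin n)) (k : ℕ) : ℝ :=
  ∑ i ∈ Finset.univ.filter (fun i : Fin n => (i : ℕ) < k), LIsv G i

/-- `S_k(L(G))`, the sum of the `k` largest Laplacian eigenvalues of `G`. -/
noncomputable def lapSum {n : ℕ} (G : SimpleGraph (Fin n)) (k : ℕ) : ℝ :=
  ∑ i ∈ Finset.univ.filter (fun i : Fin n => (i : ℕ) < k), lapEig G i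

/-!
Write `a = 2m/n` and `μ₁ ≥ ⋯ ≥ μₙ` for the Laplacian eigenvalues, so that the singular values of
`LI(G)` are the `|μᵢ - a|`. The largest eigenvalue is at least the average `a`, and testing the
Rayleigh quotient on `1^⊥` against `eᵤ - eᵥ`, for a non-adjacent pair with `dᵤ + dᵥ ≤ 4m/n`
(which exists by Cauchy–Schwarz since `G ≠ Kₙ`), gives `μₙ₋₁ ≤ a`. Hence `|μᵢ - a| ≤ μ₁ - μₙ₋₁`
for every `i < n`. When `m ≥ n²/4` moreover `0 ≤ μᵢ ≤ n ≤ 2a`, so every `|μᵢ - a|` is at most `a`.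
Among the `k` largest singular values, one is therefore bounded by `a` and the others by the
spread.
-/

open Matrix

theorem Finset.sum_le_add_mul_of_forall_ne_le {ι R : Type*} [DecidableEq ι] [CommRing R]
    [LinearOrder R] [IsStrictOrderedRing R] (s : Finset ι) (f : ι → R) (i₀ : ι) {a b : R}
    {k : ℕ} (ha : 0 ≤ a) (hb : 0 ≤ b) (hk : 1 ≤ k) (hs : #s ≤ k) (hfa : ∀ i ∈ s, f i ≤ a)
    (hfb : ∀ i ∈ s, i ≠ i₀ → f i ≤ b) :
    ∑ i ∈ s, f i ≤ a + ((k : R) - 1) * b := by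
  have hk' : (0 : R) ≤ (k : R) - 1 := sub_nonneg.2 (by exact_mod_cast hk)
  obtain rfl | ⟨t₁, ht₁⟩ := s.eq_empty_or_nonempty
  · simpa using add_nonneg ha (mul_nonneg hk' hb)
  -- the term bounded by `a` is the one at `i₀` if `i₀ ∈ s`, so the others are bounded by `b`
  set t := if i₀ ∈ s then i₀ else t₁
  have ht : t ∈ s := by unfold t; split_ifs <;> assumption
  have hrest : ∀ i ∈ s.erase t, f i ≤ b := fun i hi ↦
    hfb i (mem_of_mem_erase hi) fun h ↦ by subst h; simp [t, mem_of_mem_erase hi] at hi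
  calc ∑ i ∈ s, f i = f t + ∑ i ∈ s.erase t, f i := (add_sum_erase s f ht).symm
    _ ≤ a + #(s.erase t) • b := add_le_add (hfa t ht) (sum_le_card_nsmul _ _ _ hrest)
    _ ≤ a + ((k : R) - 1) * b := by
      rw [card_erase_of_mem ht, nsmul_eq_mul, Nat.cast_sub (card_pos.2 ⟨t, ht⟩), Nat.cast_one]
      gcongr

section SortDesc

variable {n : ℕ} (f : Fin n → ℝ)

noncomputable def sortDescPerm : Equiv.Perm (Fin n) :=
  Fin.revPerm.trans (Tuple.sort f)

theorem sortDesc_antitone : Antitone (sortDesc f) :=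
  fun _ _ hij ↦ Tuple.monotone_sort f (Fin.rev_le_rev.mpr hij)

theorem sum_sortDesc : ∑ i, sortDesc f i = ∑ i, f i :=
  Equiv.sum_comp (sortDescPerm f) f

theorem sortDesc_le_apply_of_ne (hn : 0 < n) {j : Fin n}
    (hj : j ≠ sortDescPerm f ⟨n - 1, by omega⟩) : sortDesc f ⟨n - 2, by omega⟩ ≤ f j := by
  obtain ⟨i, rfl⟩ := (sortDescPerm f).surjective j
  have hi : (i : ℕ) ≠ n - 1 := fun h ↦ hj (congrArg _ (Fin.ext h))
  exact sortDesc_antitone f (Fin.le_iff_val_le_val.2 (show (i : ℕ) ≤ n - 2 by omega))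

theorem sum_sortDesc_le (s : Finset (Fin n)) (j₀ : Fin n) {a b : ℝ} {k : ℕ} (ha : 0 ≤ a)
    (hb : 0 ≤ b) (hk : 1 ≤ k) (hs : #s ≤ k) (hfa : ∀ j, f j ≤ a) (hfb : ∀ j ≠ j₀, f j ≤ b) :
    ∑ i ∈ s, sortDesc f i ≤ a + ((k : ℝ) - 1) * b :=
  s.sum_le_add_mul_of_forall_ne_le _ ((sortDescPerm f).symm j₀) ha hb hk hs
    (fun _ _ ↦ hfa _) fun i _ hi ↦ hfb (sortDescPerm f i) fun h ↦ hi ((Equiv.eq_symm_apply _).2 h)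

end SortDesc

theorem Matrix.IsHermitian.dotProduct_mulVec_comm {ι : Type*} [Fintype ι] {A : Matrix ι ι ℝ}
    (hA : A.IsHermitian) (x y : ι → ℝ) : x ⬝ᵥ A *ᵥ y = y ⬝ᵥ A *ᵥ x := by
  rw [dotProduct_mulVec, ← mulVec_transpose, ← conjTranspose_eq_transpose_of_trivial, hA.eq,
    dotProduct_comm]

namespace Matrix.IsHermitian

variable {ι : Type*} [Fintype ι] [DecidableEq ι] {A : Matrix ι ι ℝ} (hA : A.IsHermitian)
include hA

theorem sum_sq_dotProduct_eigenvectorBasis (x : ι → ℝ) :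
    ∑ j, (⇑(hA.eigenvectorBasis j) ⬝ᵥ x) ^ 2 = x ⬝ᵥ x := by
  have := hA.eigenvectorBasis.sum_inner_mul_inner (WithLp.toLp 2 x) (WithLp.toLp 2 x)
  simp only [EuclideanSpace.inner_eq_star_dotProduct, star_trivial] at this
  simpa [dotProduct_comm x, sq] using this

theorem dotProduct_mulVec_eq_sum (x : ι → ℝ) :
    x ⬝ᵥ A *ᵥ x = ∑ j, hA.eigenvalues j * (⇑(hA.eigenvectorBasis j) ⬝ᵥ x) ^ 2 := by
  have := hA.eigenvectorBasis.sum_inner_mul_inner (WithLp.toLp 2 x) (WithLp.toLp 2 (A *ᵥ x))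
  simp only [EuclideanSpace.inner_eq_star_dotProduct, star_trivial] at this
  rw [dotProduct_comm, ← this]
  refine sum_congr rfl fun j _ ↦ ?_
  rw [dotProduct_comm (A *ᵥ x), hA.dotProduct_mulVec_comm, mulVec_eigenvectorBasis,
    dotProduct_smul, smul_eq_mul, dotProduct_comm x]
  ring

theorem mul_dotProduct_self_le_of_forall_ne (j₀ : ι) {μ : ℝ}
    (hμ : ∀ j ≠ j₀, μ ≤ hA.eigenvalues j) {x : ι → ℝ}
    (hx : ⇑(hA.eigenvectorBasis j₀) ⬝ᵥ x = 0) : μ * (x ⬝ᵥ x) ≤ x ⬝ᵥ A *ᵥ x := by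
  rw [← hA.sum_sq_dotProduct_eigenvectorBasis, hA.dotProduct_mulVec_eq_sum, mul_sum]
  refine sum_le_sum fun j _ ↦ ?_
  rcases eq_or_ne j j₀ with rfl | hj
  · simp [hx]
  · exact mul_le_mul_of_nonneg_right (hμ j hj) (sq_nonneg _)

theorem eigenvalues_le_of_forall {C : ℝ} (h : ∀ x, x ⬝ᵥ A *ᵥ x ≤ C * (x ⬝ᵥ x)) (j : ι) :
    hA.eigenvalues j ≤ C := by
  have hv : ⇑(hA.eigenvectorBasis j) ⬝ᵥ ⇑(hA.eigenvectorBasis j) = 1 := by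
    have := orthonormal_iff_ite.1 hA.eigenvectorBasis.orthonormal j j
    rwa [if_pos rfl, EuclideanSpace.inner_eq_star_dotProduct, star_trivial] at this
  simpa [mulVec_eigenvectorBasis, hv] using h (hA.eigenvectorBasis j)

end Matrix.IsHermitian

theorem Matrix.PosSemidef.mul_dotProduct_self_le_of_mulVec_eq_zero {ι : Type*} [Fintype ι]
    [DecidableEq ι] {A : Matrix ι ι ℝ} (hA : A.PosSemidef) (j₀ : ι) {μ : ℝ}
    (hμ : ∀ j ≠ j₀, μ ≤ hA.isHermitian.eigenvalues j) {z : ι → ℝ} (hz : A *ᵥ z = 0)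
    (hz0 : z ≠ 0) {x : ι → ℝ} (hzx : z ⬝ᵥ x = 0) : μ * (x ⬝ᵥ x) ≤ x ⬝ᵥ A *ᵥ x := by
  have hA' := hA.isHermitian
  have hxAx : 0 ≤ x ⬝ᵥ A *ᵥ x := by simpa using hA.dotProduct_mulVec_nonneg x
  rcases le_or_gt μ 0 with hμ0 | hμ0
  · have : 0 ≤ x ⬝ᵥ x := by simpa using dotProduct_self_star_nonneg x
    nlinarith
  set v := ⇑(hA'.eigenvectorBasis j₀)
  have hvz : v ⬝ᵥ z ≠ 0 := fun h ↦ by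
    have := hA'.mul_dotProduct_self_le_of_forall_ne j₀ hμ h
    have hzz : 0 < z ⬝ᵥ z := by simpa using dotProduct_self_star_pos_iff.2 hz0
    rw [hz, dotProduct_zero] at this
    nlinarith
  -- moving `x` along the kernel vector `z` until it is orthogonal to `v` keeps its quadratic
  -- form and does not decrease its norm
  set t := v ⬝ᵥ x / v ⬝ᵥ z
  set w := x - t • z
  have hvw : v ⬝ᵥ w = 0 := by
    simp only [w, t, dotProduct_sub, dotProduct_smul, smul_eq_mul]
    field_simp
    ring
  have hww : x ⬝ᵥ x ≤ w ⬝ᵥ w := by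
    simp only [w, dotProduct_sub, sub_dotProduct, dotProduct_smul, smul_dotProduct, smul_eq_mul,
      dotProduct_comm x z, hzx]
    have hzz : 0 ≤ z ⬝ᵥ z := by simpa using dotProduct_self_star_nonneg z
    nlinarith [mul_nonneg (sq_nonneg t) hzz]
  calc μ * (x ⬝ᵥ x) ≤ μ * (w ⬝ᵥ w) := by gcongr
    _ ≤ w ⬝ᵥ A *ᵥ w := hA'.mul_dotProduct_self_le_of_forall_ne j₀ hμ hvw
    _ = x ⬝ᵥ A *ᵥ x := by
      simp only [w, mulVec_sub, mulVec_smul, hz, smul_zero, sub_zero, sub_dotProduct,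
        smul_dotProduct, hA'.dotProduct_mulVec_comm z, dotProduct_zero, smul_zero]

namespace SimpleGraph

variable {V : Type*} [Fintype V] (G : SimpleGraph V) [DecidableRel G.Adj]

theorem sum_degrees_cast_eq_twice_card_edges :
    ∑ v, (G.degree v : ℝ) = 2 * #G.edgeFinset := by
  have h := congrArg (Nat.cast : ℕ → ℝ) G.sum_degrees_eq_twice_card_edges
  push_cast at h
  exact h

theorem sum_filter_adj_fst (g : V → ℝ) :
    ∑ p ∈ univ.filter (fun p : V × V ↦ G.Adj p.1 p.2), g p.1 = ∑ u, G.degree u * g u := by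
  rw [sum_filter, Fintype.sum_prod_type]
  refine sum_congr rfl fun u _ ↦ ?_
  have hdeg : (G.degree u : ℝ) = ∑ v, if G.Adj u v then 1 else 0 := G.degree_eq_sum_if_adj u
  rw [hdeg, sum_mul]
  simp only [ite_mul, one_mul, zero_mul]

theorem sum_filter_adj_snd (g : V → ℝ) :
    ∑ p ∈ univ.filter (fun p : V × V ↦ G.Adj p.1 p.2), g p.2 = ∑ u, G.degree u * g u := by
  rw [← sum_filter_adj_fst, sum_filter, sum_filter, Fintype.sum_prod_type, Fintype.sum_prod_type,
    sum_comm]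
  simp only [G.adj_comm]

variable [DecidableEq V]

theorem exists_compl_adj_degree_add_le (hG : G ≠ ⊤) :
    ∃ u v, Gᶜ.Adj u v ∧ (G.degree u + G.degree v : ℝ) ≤ 4 * #G.edgeFinset / Fintype.card V := by
  set P := univ.filter (fun p : V × V ↦ Gᶜ.Adj p.1 p.2)
  have hP : P.Nonempty := by
    obtain ⟨a, b, hab⟩ := ne_bot_iff_exists_adj.1 (compl_eq_bot.not.2 hG)
    exact ⟨(a, b), by simpa [P] using hab⟩
  set n : ℝ := (Fintype.card V : ℝ) with hn_def
  set m : ℝ := (#G.edgeFinset : ℝ)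
  set d : V → ℝ := fun u ↦ G.degree u
  have hn : 0 < n := Nat.cast_pos.2 (Fintype.card_pos_iff.2 ⟨hP.choose.1⟩)
  have hcompl : ∀ u, (Gᶜ.degree u : ℝ) = n - 1 - d u := fun u ↦ by
    have h : Gᶜ.degree u + G.degree u + 1 = Fintype.card V := by
      have := G.degree_lt_card_verts u
      rw [G.degree_compl]
      omega
    rw [hn_def, ← h]
    push_cast
    ring
  have hsum : ∑ u, d u = 2 * m := G.sum_degrees_cast_eq_twice_card_edges
  have hCS : (2 * m) ^ 2 ≤ n * ∑ u, d u ^ 2 := by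
    simpa [hsum] using sq_sum_le_card_mul_sum_sq (s := univ) (f := d)
  -- on average over the ordered non-adjacent pairs, `dᵤ + dᵥ - 4m/n` equals
  -- `(8m² - 2n ∑ d²) / (n · #P)`, which is nonpositive by Cauchy–Schwarz
  obtain ⟨p, hp, hle⟩ := exists_le_of_sum_le hP (f := fun p ↦ d p.1 + d p.2)
    (g := fun _ ↦ 4 * m / n) (by
      rw [sum_add_distrib, Gᶜ.sum_filter_adj_fst, Gᶜ.sum_filter_adj_snd,
        Gᶜ.sum_filter_adj_fst (fun _ ↦ 4 * m / n)]
      simp only [hcompl, sub_mul, sum_sub_distrib, ← sum_mul, sum_const, card_univ, nsmul_eq_mul,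
        ← mul_sum, one_mul, hsum, ← hn_def, ← sq]
      field_simp
      nlinarith [hCS])
  exact ⟨p.1, p.2, (mem_filter.1 hp).2, hle⟩

theorem trace_lapMatrix : (G.lapMatrix ℝ).trace = 2 * #G.edgeFinset := by
  simpa [trace, lapMatrix, degMatrix] using G.sum_degrees_cast_eq_twice_card_edges

theorem dotProduct_lapMatrix_mulVec_le (x : V → ℝ) :
    x ⬝ᵥ G.lapMatrix ℝ *ᵥ x ≤ Fintype.card V * (x ⬝ᵥ x) := by
  have hL := G.lapMatrix_toLinearMap₂' ℝ x
  rw [toLinearMap₂'_apply'] at hL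
  have hall : ∑ i, ∑ j, (x i - x j) ^ 2 = 2 * (Fintype.card V * (x ⬝ᵥ x) - (∑ i, x i) ^ 2) := by
    have hxx : x ⬝ᵥ x = ∑ i, x i ^ 2 := by simp [dotProduct, sq]
    simp only [hxx, sub_sq, sum_add_distrib, sum_sub_distrib, sum_const, card_univ, nsmul_eq_mul,
      ← mul_sum, ← sum_mul]
    ring
  have hle : ∑ i, ∑ j, (if G.Adj i j then (x i - x j) ^ 2 else 0) ≤ ∑ i, ∑ j, (x i - x j) ^ 2 :=
    sum_le_sum fun i _ ↦ sum_le_sum fun j _ ↦ by split_ifs; exacts [le_rfl, sq_nonneg _]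
  rw [hL]
  nlinarith [sq_nonneg (∑ i, x i)]

theorem dotProduct_lapMatrix_mulVec_single_sub_single {u v : V} (huv : u ≠ v)
    (hadj : ¬G.Adj u v) :
    (Pi.single u 1 - Pi.single v 1) ⬝ᵥ G.lapMatrix ℝ *ᵥ (Pi.single u 1 - Pi.single v 1) =
      G.degree u + G.degree v := by
  simp [mulVec_sub, dotProduct_sub, sub_dotProduct, lapMatrix, degMatrix, hadj, huv, huv.symm,
    G.adj_comm v u]

end SimpleGraph

section LapEig

variable {n : ℕ} (G : SimpleGraph (Fin n))

theorem lapEig_antitone : Antitone (lapEig G) := sortDesc_antitone _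

theorem lapEig_nonneg (i : Fin n) : 0 ≤ lapEig G i :=
  (posSemidef_lapMatrix ℝ G).eigenvalues_nonneg _

theorem lapEig_le (i : Fin n) : lapEig G i ≤ n := by
  refine (posSemidef_lapMatrix ℝ G).isHermitian.eigenvalues_le_of_forall (fun x ↦ ?_) _
  simpa using G.dotProduct_lapMatrix_mulVec_le x

theorem sum_lapEig : ∑ i, lapEig G i = 2 * numEdges G := by
  rw [lapEig, sum_sortDesc]
  have h := (posSemidef_lapMatrix ℝ G).isHermitian.trace_eq_sum_eigenvalues
  simp only [RCLike.ofReal_real_eq_id, id] at h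
  rw [← h, trace_lapMatrix, numEdges]

theorem two_mul_numEdges_div_le_lapEig_zero (hn : 0 < n) :
    2 * numEdges G / n ≤ lapEig G ⟨0, hn⟩ := by
  rw [div_le_iff₀ (by exact_mod_cast hn)]
  calc (2 * numEdges G : ℝ) = ∑ i, lapEig G i := (sum_lapEig G).symm
    _ ≤ ∑ _i : Fin n, lapEig G ⟨0, hn⟩ :=
      sum_le_sum fun i _ ↦ lapEig_antitone G (Fin.mk_le_of_le_val (Nat.zero_le _))
    _ = lapEig G ⟨0, hn⟩ * n := by simp [mul_comm]

theorem lapEig_sub_two_le_two_mul_numEdges_div (hG : G ≠ ⊤) (hn : 0 < n) :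
    lapEig G ⟨n - 2, by omega⟩ ≤ 2 * numEdges G / n := by
  obtain ⟨u, v, huv, hdeg⟩ := G.exists_compl_adj_degree_add_le hG
  rw [compl_adj] at huv
  have hx : lapEig G ⟨n - 2, by omega⟩ * 2 ≤ G.degree u + G.degree v := by
    have := (posSemidef_lapMatrix ℝ G).mul_dotProduct_self_le_of_mulVec_eq_zero _
      (fun j hj ↦ sortDesc_le_apply_of_ne _ hn hj) G.lapMatrix_mulVec_const_eq_zero
      (fun h ↦ one_ne_zero (congrFun h ⟨0, hn⟩)) (x := Pi.single u 1 - Pi.single v 1) (by simp)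
    rw [G.dotProduct_lapMatrix_mulVec_single_sub_single huv.1 huv.2] at this
    rw [lapEig]
    simpa [huv.1, huv.1.symm, one_add_one_eq_two] using this
  rw [Fintype.card_fin] at hdeg
  have h4 : (4 * #G.edgeFinset / n : ℝ) = 2 * (2 * numEdges G / n) := by rw [numEdges]; ring
  linarith

theorem abs_lapEig_sub_div_le_of_ne (hG : G ≠ ⊤) (hn : 0 < n) {i : Fin n}
    (hi : i ≠ ⟨n - 1, by omega⟩) :
    |lapEig G i - 2 * numEdges G / n| ≤ lapEig G ⟨0, hn⟩ - lapEig G ⟨n - 2, by omega⟩ := by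
  have hi' : (i : ℕ) ≠ n - 1 := fun h ↦ hi (Fin.ext h)
  have h₁ := lapEig_antitone G
    (Fin.le_iff_val_le_val.2 (show (i : ℕ) ≤ n - 2 by omega) : i ≤ ⟨n - 2, by omega⟩)
  have h₂ := lapEig_antitone G (Fin.mk_le_of_le_val (Nat.zero_le i) : ⟨0, hn⟩ ≤ i)
  have h₃ := lapEig_sub_two_le_two_mul_numEdges_div G hG hn
  have h₄ := two_mul_numEdges_div_le_lapEig_zero G hn
  rw [abs_le]
  constructor <;> linarith

theorem abs_lapEig_sub_div_le (h : (n : ℝ) ^ 2 / 4 ≤ numEdges G) (i : Fin n) :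
    |lapEig G i - 2 * numEdges G / n| ≤ 2 * numEdges G / n := by
  have hn : (0 : ℝ) < n := by exact_mod_cast i.pos
  have h₁ := lapEig_nonneg G i
  have h₂ := lapEig_le G i
  have h₃ : (n : ℝ) ≤ 2 * (2 * numEdges G / n) := by
    rw [← mul_div_assoc, le_div_iff₀ hn]
    nlinarith
  rw [abs_le]
  constructor <;> linarith

end LapEig

/-- Let `G ≠ Kₙ` be a simple graph on `n` vertices with `m ≥ 1` edges, and
`k ≥ 2`. If `m ≥ n²/4`, then `‖LI(G)‖_{F_k} ≤ 2m/n + (k-1)·spr(L(G))`, where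
`spr(L(G)) = μ₁(G) - μₙ₋₁(G)`. -/
theorem stmt_11 {n : ℕ} (hn : 0 < n) (G : SimpleGraph (Fin n)) (hG : G ≠ ⊤)
    (k : ℕ) (hk : 2 ≤ k)
    (h : (n : ℝ) ^ 2 / 4 ≤ (numEdges G : ℝ)) :
    kyFanLI G k ≤ 2 * (numEdges G : ℝ) / n +
      ((k : ℝ) - 1) * (lapEig G ⟨0, hn⟩ - lapEig G ⟨n - 2, by omega⟩) := by
  have hcard : #(univ.filter fun i : Fin n ↦ (i : ℕ) < k) ≤ k := by
    simpa using (Fin.card_filter_val_lt (n := n) (m := k)).le.trans (min_le_right _ _)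
  have hspread : 0 ≤ lapEig G ⟨0, hn⟩ - lapEig G ⟨n - 2, by omega⟩ :=
    sub_nonneg.2 (lapEig_antitone G (Fin.mk_le_of_le_val (Nat.zero_le _)))
  exact sum_sortDesc_le _ _ ⟨n - 1, by omega⟩ (by positivity) hspread (by omega) hcard
    (abs_lapEig_sub_div_le G h) fun _ hi ↦ abs_lapEig_sub_div_le_of_ne G hG hn hi
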